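/- If f is a geodesic Leech labeling of the cycle graph C_10 on 10 vertices, then the sum of the labels of the 10 edges of C_10 equals 85. -/

import Mathlib

open SimpleGraph Finset

/-- A walk in `G` is a *geodesic walk* if it is a nontrivial path whose length equals
the distance in `G` between its endpoints. -/
def SimpleGraph.IsGeodesicWalk {V : Type*} (G : SimpleGraph V) {u v : V}
    (p : G.Walk u v) : Prop :=
  p.IsPath ∧ p.length = G.dist u v ∧ 0 < p.length

/-- The geodesic paths of `G`, where a path and its reverse are identified by
recording the (finite) set of edges of the path.  (A nontrivial path is determined,
up to reversal, by its edge set.) -/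
def SimpleGraph.geodesicPathSets {V : Type*} [DecidableEq V] (G : SimpleGraph V) :
    Set (Finset (Sym2 V)) :=
  {S | ∃ (u v : V) (p : G.Walk u v), G.IsGeodesicWalk p ∧ p.edges.toFinset = S}

/-- The geodesic path number `t_gp(G)`: the number of geodesic paths of `G`. -/
noncomputable def SimpleGraph.tgp {V : Type*} [DecidableEq V] (G : SimpleGraph V) : ℕ :=
  G.geodesicPathSets.ncard

/-- `f` is a geodesic Leech labeling of `G`: an edge labeling by positive integers such
that the weights of the geodesic paths of `G` are exactly `1, 2, …, t_gp(G)`,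
each occurring exactly once. -/
def SimpleGraph.IsGeodesicLeechLabeling {V : Type*} [DecidableEq V] (G : SimpleGraph V)
    (f : Sym2 V → ℕ) : Prop :=
  (∀ e ∈ G.edgeSet, 1 ≤ f e) ∧
    Set.BijOn (fun S => ∑ e ∈ S, f e) G.geodesicPathSets (Set.Icc 1 G.tgp)

/-!
A walk of length `L` from `u` to `v` in `C_n` that takes `b` backward steps satisfies
`v - u + 2b ≡ L (mod n)`. For a geodesic, `L` is at most both `(v - u) mod n` and `(u - v) mod n`,
which forces `b = 0` or `b = L`: every geodesic path is an arc of length `1 ≤ L ≤ n / 2`, and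
conversely. So `C_10` has `50` geodesic paths, the arcs of length `1, …, 5`, and every edge lies
on `1 + 2 + 3 + 4 + 5 = 15` of them. Counting the weights of all geodesic paths edge by edge gives
`15 · ∑ f = 1 + 2 + ⋯ + 50 = 1275`.
-/

open Fin.NatCast Fin.CommRing

theorem Nat.ModEq.eq_or_eq_add {N a c : ℕ} (h : a ≡ c [MOD N]) (hca : c ≤ a)
    (hac : a ≤ c + N) : a = c ∨ a = c + N := by
  obtain ⟨k, hk⟩ := (Nat.modEq_iff_dvd' hca).1 h.symm
  rcases k with _ | _ | k
  · omega
  · omega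
  · have : N * (k + 1 + 1) = N * k + 2 * N := by ring
    omega

theorem Fin.modEq_of_natCast_eq {N a c : ℕ} [NeZero N] (h : (a : Fin N) = c) :
    a ≡ c [MOD N] :=
  congrArg Fin.val h

theorem Fin.val_sub_add_val_sub {n : ℕ} {u v : Fin n} (h : u ≠ v) :
    (v - u).val + (u - v).val = n := by
  rcases lt_or_gt_of_ne h with huv | hvu
  · rw [Fin.sub_val_of_le huv.le, Fin.coe_sub_iff_lt.2 huv]
    have := Fin.lt_def.1 huv
    omega
  · rw [Fin.coe_sub_iff_lt.2 hvu, Fin.sub_val_of_le hvu.le]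
    have := Fin.lt_def.1 hvu
    omega

theorem Finset.sum_sum_eq_nsmul_sum_of_card_filter {α β : Type*} [DecidableEq α]
    [AddCommMonoid β] {A : Finset (Finset α)} {E : Finset α} {k : ℕ} (hA : ∀ S ∈ A, S ⊆ E)
    (hE : ∀ e ∈ E, #{S ∈ A | e ∈ S} = k) (f : α → β) :
    ∑ S ∈ A, ∑ e ∈ S, f e = k • ∑ e ∈ E, f e := by
  rw [sum_comm' (t' := E) (s' := fun e => {S ∈ A | e ∈ S}), smul_sum]
  · exact sum_congr rfl fun e he => by rw [sum_const, hE e he]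
  · intro S e
    rw [mem_filter]
    exact ⟨fun ⟨hS, he⟩ => ⟨⟨hS, he⟩, hA S hS he⟩, fun ⟨hSe, _⟩ => hSe⟩

namespace SimpleGraph

theorem IsGeodesicLeechLabeling.sum_weights {V : Type*} [DecidableEq V]
    {G : SimpleGraph V} {f : Sym2 V → ℕ} {A : Finset (Finset (Sym2 V))}
    (hA : G.geodesicPathSets = A) (hf : G.IsGeodesicLeechLabeling f) :
    ∑ S ∈ A, ∑ e ∈ S, f e = ∑ k ∈ Icc 1 #A, k := by
  have hbij := hf.2
  rw [tgp, hA, Set.ncard_coe_finset, ← coe_Icc] at hbij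
  exact sum_nbij _ (fun S hS => hbij.mapsTo hS) hbij.injOn hbij.surjOn fun _ _ => rfl

section CycleArc

variable {N : ℕ} [NeZero N]

def cycleArc (u : Fin N) (L : ℕ) : Finset (Sym2 (Fin N)) :=
  (range L).image fun i : ℕ => s(u + i, u + i + 1)

theorem cycleArc_succ (u : Fin N) (L : ℕ) :
    cycleArc u (L + 1) = insert s(u + L, u + L + 1) (cycleArc u L) := by
  rw [cycleArc, range_add_one, image_insert, cycleArc]

theorem cycleArc_succ' (u : Fin N) (L : ℕ) :
    cycleArc u (L + 1) = insert s(u, u + 1) (cycleArc (u + 1) L) := by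
  rw [cycleArc, range_add_one', image_insert, map_eq_image, image_image, cycleArc]
  congr 1
  · simp
  · refine image_congr fun i _ => ?_
    change s(u + ((i + 1 : ℕ) : Fin N), u + ((i + 1 : ℕ) : Fin N) + 1) = _
    push_cast
    congr 1 <;> ring

variable (N) in
def cycleArcs : Finset (Finset (Sym2 (Fin N))) :=
  (univ ×ˢ Icc 1 (N / 2)).image fun q => cycleArc q.1 q.2

end CycleArc

variable {n : ℕ}

theorem cycleGraph_adj_add_one (u : Fin (n + 2)) : (cycleGraph (n + 2)).Adj u (u + 1) :=
  cycleGraph_adj.2 (Or.inr (by ring))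

def cycleArcWalk (u : Fin (n + 2)) : (L : ℕ) → (cycleGraph (n + 2)).Walk u (u + L)
  | 0 => Walk.nil.copy rfl (by simp)
  | L + 1 => (Walk.cons (cycleGraph_adj_add_one u) (cycleArcWalk (u + 1) L)).copy rfl
      (by push_cast; ring)

theorem length_cycleArcWalk (u : Fin (n + 2)) (L : ℕ) : (cycleArcWalk u L).length = L := by
  induction L generalizing u with
  | zero => simp [cycleArcWalk]
  | succ L ih => simp [cycleArcWalk, ih]

theorem edges_cycleArcWalk (u : Fin (n + 2)) (L : ℕ) :
    (cycleArcWalk u L).edges.toFinset = cycleArc u L := by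
  induction L generalizing u with
  | zero => simp [cycleArcWalk, cycleArc]
  | succ L ih => simp [cycleArcWalk, ih, cycleArc_succ']

theorem support_cycleArcWalk (u : Fin (n + 2)) (L : ℕ) :
    (cycleArcWalk u L).support = (List.range (L + 1)).map fun i : ℕ => u + i := by
  induction L generalizing u with
  | zero => simp [cycleArcWalk]
  | succ L ih =>
    rw [cycleArcWalk, Walk.support_copy, Walk.support_cons, ih,
      List.range_succ_eq_map (n := L + 1), List.map_cons, List.map_map]
    congr 1
    · simp
    · refine List.map_congr_left fun i _ => ?_
      simp only [Function.comp_apply]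
      push_cast
      ring

theorem isPath_cycleArcWalk (u : Fin (n + 2)) {L : ℕ} (hL : L < n + 2) :
    (cycleArcWalk u L).IsPath := by
  rw [Walk.isPath_def, support_cycleArcWalk]
  refine List.Nodup.map_on (fun i hi j hj hij => ?_) List.nodup_range
  have hval := congrArg Fin.val (add_left_cancel hij)
  simp only [List.mem_range, Fin.val_natCast] at hi hj hval
  rwa [Nat.mod_eq_of_lt (by omega), Nat.mod_eq_of_lt (by omega)] at hval

/-- Here `b` is the number of backward steps, from some `x` to `x - 1`. -/
theorem Walk.exists_backward_steps_cycleGraph {u v : Fin (n + 2)}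
    (p : (cycleGraph (n + 2)).Walk u v) :
    ∃ b ≤ p.length, v - u + ((2 * b : ℕ) : Fin (n + 2)) = p.length ∧
      (b = 0 → p.edges.toFinset = cycleArc u p.length) ∧
      (b = p.length → p.edges.toFinset = cycleArc v p.length) := by
  induction p with
  | nil => exact ⟨0, le_rfl, by simp, fun _ => by simp [cycleArc], fun _ => by simp [cycleArc]⟩
  | @cons u w v h q ih =>
    obtain ⟨b, hb, hcong, hfwd, hbwd⟩ := ih
    rw [Walk.length_cons, Walk.edges_cons, List.toFinset_cons]
    rcases cycleGraph_adj.1 h with hstep | hstep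
    · obtain rfl : w = u - 1 := by linear_combination -hstep
      refine ⟨b + 1, by omega, by push_cast at hcong ⊢; linear_combination hcong, by omega,
        fun hbL => ?_⟩
      obtain rfl : b = q.length := by omega
      have hv : v + (q.length : ℕ) = u - 1 := by push_cast at hcong; linear_combination hcong
      rw [hbwd rfl, cycleArc_succ, hv, sub_add_cancel, Sym2.eq_swap]
    · obtain rfl : w = u + 1 := by linear_combination hstep
      refine ⟨b, by omega, by push_cast at hcong ⊢; linear_combination hcong,
        fun hb0 => by rw [hfwd hb0, cycleArc_succ'], by omega⟩

theorem dist_cycleGraph_le (u v : Fin (n + 2)) :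
    (cycleGraph (n + 2)).dist u v ≤ (v - u).val := by
  have hend : u + (((v - u).val : ℕ) : Fin (n + 2)) = v := by rw [Fin.cast_val_eq_self]; ring
  simpa [length_cycleArcWalk] using dist_le ((cycleArcWalk u (v - u).val).copy rfl hend)

theorem IsGeodesicWalk.edges_mem_cycleArcs {u v : Fin (n + 2)}
    {p : (cycleGraph (n + 2)).Walk u v} (hp : (cycleGraph (n + 2)).IsGeodesicWalk p) :
    p.edges.toFinset ∈ cycleArcs (n + 2) := by
  obtain ⟨-, hdist, hpos⟩ := hp
  have hne : u ≠ v := by rintro rfl; rw [dist_self] at hdist; omega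
  have hfwd := dist_cycleGraph_le u v
  have hbwd := dist_cycleGraph_le v u
  rw [dist_comm] at hbwd
  have hsum := Fin.val_sub_add_val_sub hne
  rw [← hdist] at hfwd hbwd
  obtain ⟨b, hb, hcong, hedges_fwd, hedges_bwd⟩ := Walk.exists_backward_steps_cycleGraph p
  rw [← Fin.cast_val_eq_self (v - u), ← Nat.cast_add] at hcong
  rcases (Fin.modEq_of_natCast_eq hcong).eq_or_eq_add (by omega) (by omega) with h | h
  · refine mem_image.2 ⟨(u, p.length), ?_, (hedges_fwd (by omega)).symm⟩
    simp only [mem_product, mem_univ, mem_Icc, true_and]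
    omega
  · refine mem_image.2 ⟨(v, p.length), ?_, (hedges_bwd (by omega)).symm⟩
    simp only [mem_product, mem_univ, mem_Icc, true_and]
    omega

theorem isGeodesicWalk_cycleArcWalk (u : Fin (n + 2)) {L : ℕ} (h1 : 1 ≤ L)
    (h2 : L ≤ (n + 2) / 2) : (cycleGraph (n + 2)).IsGeodesicWalk (cycleArcWalk u L) := by
  refine ⟨isPath_cycleArcWalk u (by omega), le_antisymm ?_ (dist_le _),
    by rw [length_cycleArcWalk]; omega⟩
  obtain ⟨q, hq⟩ := Reachable.exists_walk_length_eq_dist ⟨cycleArcWalk u L⟩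
  obtain ⟨b, hb, hcong, -, -⟩ := Walk.exists_backward_steps_cycleGraph q
  rw [add_sub_cancel_left, ← Nat.cast_add] at hcong
  have hqL : q.length ≤ L := hq ▸ dist_le (cycleArcWalk u L) |>.trans_eq (length_cycleArcWalk u L)
  rcases (Fin.modEq_of_natCast_eq hcong).eq_or_eq_add (by omega) (by omega) with h | h <;>
    rw [length_cycleArcWalk, ← hq] <;> omega

theorem geodesicPathSets_cycleGraph :
    (cycleGraph (n + 2)).geodesicPathSets = cycleArcs (n + 2) := by
  ext S
  constructor
  · rintro ⟨u, v, p, hp, rfl⟩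
    exact IsGeodesicWalk.edges_mem_cycleArcs hp
  · intro hS
    obtain ⟨⟨u, L⟩, hL, rfl⟩ := mem_image.1 hS
    simp only [mem_product, mem_univ, mem_Icc, true_and] at hL
    exact ⟨u, _, cycleArcWalk u L, isGeodesicWalk_cycleArcWalk u hL.1 hL.2,
      edges_cycleArcWalk u L⟩

theorem subset_edgeFinset_of_mem_cycleArcs {S : Finset (Sym2 (Fin (n + 2)))}
    (hS : S ∈ cycleArcs (n + 2)) : S ⊆ (cycleGraph (n + 2)).edgeFinset := by
  obtain ⟨⟨u, L⟩, -, rfl⟩ := mem_image.1 hS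
  intro e he
  rw [← edges_cycleArcWalk, List.mem_toFinset] at he
  exact mem_edgeFinset.2 ((cycleArcWalk u L).edges_subset_edgeSet he)

theorem card_cycleArcs_ten : #(cycleArcs 10) = 50 := by decide

theorem card_filter_mem_cycleArcs_ten :
    ∀ e ∈ (cycleGraph 10).edgeFinset, #{S ∈ cycleArcs 10 | e ∈ S} = 15 := by decide

end SimpleGraph

/-- If `f` is a geodesic Leech labeling of the cycle on `10` vertices, then the labels
of its `10` edges sum to `85`. -/
theorem statement_7 (f : Sym2 (Fin 10) → ℕ)
    (hf : (SimpleGraph.cycleGraph 10).IsGeodesicLeechLabeling f) :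
    ∑ e ∈ (SimpleGraph.cycleGraph 10).edgeFinset, f e = 85 := by
  have hgeod : (cycleGraph 10).geodesicPathSets = cycleArcs 10 := geodesicPathSets_cycleGraph
  have hsub : ∀ S ∈ cycleArcs 10, S ⊆ (cycleGraph 10).edgeFinset :=
    fun _ => subset_edgeFinset_of_mem_cycleArcs
  have hweights := hf.sum_weights hgeod
  rw [sum_sum_eq_nsmul_sum_of_card_filter hsub card_filter_mem_cycleArcs_ten,
    card_cycleArcs_ten, smul_eq_mul] at hweights
  have hgauss : ∑ k ∈ Icc 1 50, k = 1275 := by decide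
  omega
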